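/- Fix integers m ≥ 2 and 0 < m₂ < m. On ℤ², define x ∼ y iff x + (j₁m, j₂m) = y + (j₂m₂, 0) for some j₁, j₂ ∈ ℤ. Then every point of ℤ² is ∼-equivalent to exactly one point of the discrete parallelogram P_m = {(x₁,x₂) ∈ ℤ² : -m/2 ≤ x₂ < m/2, -m/2 - (m₂/m)x₂ ≤ x₁ < m/2 - (m₂/m)x₂}. -/

import Mathlib

/-!
The shear `L p = m * p.1 + m₂ * p.2` turns the relation into a pair of congruences,
`p.2 ≡ x.2 [ZMOD m]` and `L p ≡ L x [ZMOD m ^ 2]`, while membership in `P_m` says exactly that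
`p.2` and `L p` lie in the centred residue windows `[-m/2, m/2)` and `[-m²/2, m²/2)`. Each
residue class has exactly one centred representative, and `p` is recovered from `(p.2, L p)`.
-/

/-- `t` lies in the half-open window `[-n/2, n/2)`, written without division. -/
def IsCentered (n t : ℤ) : Prop := -n ≤ 2 * t ∧ 2 * t < n

lemma IsCentered.eq_of_modEq {n s t : ℤ} (hs : IsCentered n s) (ht : IsCentered n t)
    (h : s ≡ t [ZMOD n]) : s = t := by
  have := Int.eq_zero_of_abs_lt_dvd h.dvd (by unfold IsCentered at hs ht; rw [abs_lt]; omega)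
  omega

lemma exists_isCentered_modEq {n : ℤ} (hn : 0 < n) (a : ℤ) :
    ∃ t, IsCentered n t ∧ t ≡ a [ZMOD n] := by
  refine ⟨a - n * ((2 * a + n) / (2 * n)), ?_, ?_⟩
  · have := Int.emod_add_mul_ediv (2 * a + n) (2 * n)
    have := Int.emod_nonneg (2 * a + n) (by omega : 2 * n ≠ 0)
    have := Int.emod_lt_of_pos (2 * a + n) (by omega : 0 < 2 * n)
    constructor <;> linarith
  · exact Int.modEq_iff_dvd.2 ⟨(2 * a + n) / (2 * n), by ring⟩

lemma isCentered_iff_real {n t : ℤ} :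
    IsCentered n t ↔ -(n : ℝ) / 2 ≤ t ∧ (t : ℝ) < n / 2 := by
  unfold IsCentered
  constructor
  · rintro ⟨h₁, h₂⟩
    have h₁' : (-n : ℝ) ≤ 2 * t := by exact_mod_cast h₁
    have h₂' : (2 * t : ℝ) < n := by exact_mod_cast h₂
    constructor <;> linarith
  · rintro ⟨h₁, h₂⟩
    constructor
    · exact_mod_cast (by linarith : (-n : ℝ) ≤ 2 * t)
    · exact_mod_cast (by linarith : (2 * t : ℝ) < n)

def shearForm (m m₂ : ℤ) (p : ℤ × ℤ) : ℤ := m * p.1 + m₂ * p.2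

lemma mem_parallelogram_iff {m : ℤ} (hm : 0 < m) (m₂ : ℤ) (p : ℤ × ℤ) :
    (-(m : ℝ) / 2 ≤ (p.2 : ℝ) ∧ (p.2 : ℝ) < (m : ℝ) / 2 ∧
        -(m : ℝ) / 2 - ((m₂ : ℝ) / m) * p.2 ≤ (p.1 : ℝ) ∧
        (p.1 : ℝ) < (m : ℝ) / 2 - ((m₂ : ℝ) / m) * p.2) ↔
      IsCentered m p.2 ∧ IsCentered (m ^ 2) (shearForm m m₂ p) := by
  have hm' : (0 : ℝ) < m := by exact_mod_cast hm
  have hform : ((shearForm m m₂ p : ℤ) : ℝ) = m * (p.1 + (m₂ / m) * p.2) := by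
    push_cast [shearForm]; field_simp
  have hscale (y : ℝ) : (-((m : ℝ) ^ 2) / 2 ≤ m * y ∧ m * y < (m : ℝ) ^ 2 / 2) ↔
      (-(m : ℝ) / 2 ≤ y ∧ y < m / 2) := by
    rw [sq, neg_mul_eq_mul_neg, mul_div_assoc, mul_div_assoc, mul_le_mul_iff_right₀ hm',
      mul_lt_mul_iff_right₀ hm', neg_div]
  rw [isCentered_iff_real, isCentered_iff_real, hform, Int.cast_pow, hscale, sub_le_iff_le_add,
    lt_sub_iff_add_lt, and_assoc]

lemma shear_equiv_iff {m : ℤ} (hm : m ≠ 0) (m₂ : ℤ) (x p : ℤ × ℤ) :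
    (∃ j₁ j₂ : ℤ, x + (j₁ * m, j₂ * m) = p + (j₂ * m₂, 0)) ↔
      p.2 ≡ x.2 [ZMOD m] ∧ shearForm m m₂ p ≡ shearForm m m₂ x [ZMOD m ^ 2] := by
  simp only [Int.modEq_iff_dvd, Prod.ext_iff, Prod.fst_add, Prod.snd_add, add_zero, shearForm]
  constructor
  · rintro ⟨j₁, j₂, h₁, h₂⟩
    exact ⟨⟨-j₂, by rw [← h₂]; ring⟩, ⟨-j₁, by linear_combination m * h₁ + m₂ * h₂⟩⟩
  · rintro ⟨⟨k₂, hk₂⟩, ⟨k₁, hk₁⟩⟩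
    refine ⟨-k₁, -k₂, mul_left_cancel₀ hm ?_, by linarith⟩
    linear_combination hk₁ - m₂ * hk₂

lemma existsUnique_isCentered_shearForm {m : ℤ} (hm : 0 < m) (m₂ : ℤ) (x : ℤ × ℤ) :
    ∃! p : ℤ × ℤ, (IsCentered m p.2 ∧ IsCentered (m ^ 2) (shearForm m m₂ p)) ∧
      (p.2 ≡ x.2 [ZMOD m] ∧ shearForm m m₂ p ≡ shearForm m m₂ x [ZMOD m ^ 2]) := by
  obtain ⟨p₂, hp₂, hp₂x⟩ := exists_isCentered_modEq hm x.2
  obtain ⟨t, ht, htx⟩ := exists_isCentered_modEq (pow_pos hm 2) (shearForm m m₂ x)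
  -- `t ≡ L x ≡ m₂ * x.2 ≡ m₂ * p₂ [ZMOD m]`, so `t` is a value of `L` on the row `p₂`
  obtain ⟨p₁, hp₁⟩ : m ∣ t - m₂ * p₂ := by
    obtain ⟨a, ha⟩ : m ^ 2 ∣ m * x.1 + m₂ * x.2 - t := htx.dvd
    obtain ⟨b, hb⟩ := hp₂x.dvd
    exact ⟨x.1 - m * a + m₂ * b, by linear_combination -ha + m₂ * hb⟩
  have hform : shearForm m m₂ (p₁, p₂) = t := by
    simp only [shearForm]; linarith
  refine ⟨(p₁, p₂), ⟨⟨hp₂, hform ▸ ht⟩, hp₂x, hform ▸ htx⟩, ?_⟩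
  rintro q ⟨⟨hq₂, hq⟩, hq₂x, hqx⟩
  have h₂ : q.2 = p₂ := hq₂.eq_of_modEq hp₂ (hq₂x.trans hp₂x.symm)
  have hL : shearForm m m₂ q = t := hq.eq_of_modEq ht (hqx.trans htx.symm)
  have h₁ : q.1 = p₁ := by
    simp only [shearForm, h₂] at hL
    exact mul_left_cancel₀ hm.ne' (by linarith)
  exact Prod.ext h₁ h₂

theorem parallelogram_representatives_general (m m₂ : ℤ) (hm : 2 ≤ m) (x : ℤ × ℤ) :
    ∃! p : ℤ × ℤ,
      (-(m : ℝ) / 2 ≤ (p.2 : ℝ) ∧ (p.2 : ℝ) < (m : ℝ) / 2 ∧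
        -(m : ℝ) / 2 - ((m₂ : ℝ) / m) * p.2 ≤ (p.1 : ℝ) ∧
        (p.1 : ℝ) < (m : ℝ) / 2 - ((m₂ : ℝ) / m) * p.2) ∧
      ∃ j₁ j₂ : ℤ, x + (j₁ * m, j₂ * m) = p + (j₂ * m₂, 0) := by
  have hm₀ : 0 < m := by omega
  simp only [mem_parallelogram_iff hm₀, shear_equiv_iff hm₀.ne']
  exact existsUnique_isCentered_shearForm hm₀ m₂ x

theorem parallelogram_representatives (m m₂ : ℤ) (hm : 2 ≤ m) (h2 : 0 < m₂)
    (h3 : m₂ < m) (x : ℤ × ℤ) :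
    ∃! p : ℤ × ℤ,
      (-(m : ℝ) / 2 ≤ (p.2 : ℝ) ∧ (p.2 : ℝ) < (m : ℝ) / 2 ∧
        -(m : ℝ) / 2 - ((m₂ : ℝ) / m) * p.2 ≤ (p.1 : ℝ) ∧
        (p.1 : ℝ) < (m : ℝ) / 2 - ((m₂ : ℝ) / m) * p.2) ∧
      ∃ j₁ j₂ : ℤ, x + (j₁ * m, j₂ * m) = p + (j₂ * m₂, 0) :=
  parallelogram_representatives_general m m₂ hm x
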